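/- arXiv:1402.3086 — 3 statements merged into one kernel-verified Lean document; each statement's English description precedes it below -/
import Mathlib

section
/- Let N ≥ 2 be an integer and 1 < p < N; set q = p, so γ = q/(q−(p−1)) = p. Let c_p = (p−1)^{p−1}, Λ_p = ((N−p)/p)^p, 0 ≤ λ < c_p·Λ_p, and let β ∈ [0,(N−p)/p) be the unique solution of −(p−1)β^p + (N−p)β^{p−1} = λ/c_p. For R > 0 define v(r) = (p−1)·β·log(R/r) on (0,R). Then v satisfies −(−v'(r))^{p−2}·((p−1)v''(r) + ((N−1)/r)·v'(r)) = (−v'(r))^p + λ/r^p for all r ∈ (0,R). -/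
/-! With `c = (p - 1) β`, the profile `v = c log (R / r)` has `-v' = c / r` and `v'' = c / r²`, so
both sides of the equation are multiples of `r^{-p}`: the left one is `(N - p) c^{p-1} r^{-p}` and the
right one is `(c^p + λ) r^{-p}`. They agree because multiplying the equation defining `β` by
`(p - 1)^{p-1}` gives exactly `(N - p) c^{p-1} = c^p + λ`. -/

open Real Filter Topology

theorem hasDerivAt_mul_log_div {a R x : ℝ} (hR : R ≠ 0) (hx : x ≠ 0) :
    HasDerivAt (fun r => a * log (R / r)) (-a / x) x := by
  have hlog : HasDerivAt (fun r => a * log R - a * log r) (-a / x) x := by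
    simpa [div_eq_mul_inv] using ((hasDerivAt_log hx).const_mul a).const_sub (a * log R)
  refine hlog.congr_of_eventuallyEq ?_
  filter_upwards [eventually_ne_nhds hx] with y hy
  rw [log_div hR hy, mul_sub]

theorem deriv_deriv_mul_log_div {a R x : ℝ} (hR : R ≠ 0) (hx : x ≠ 0) :
    deriv (deriv fun r => a * log (R / r)) x = a / x ^ 2 := by
  have hderiv : (deriv fun r => a * log (R / r)) =ᶠ[𝓝 x] fun y => -a / y := by
    filter_upwards [eventually_ne_nhds hx] with y hy
    exact (hasDerivAt_mul_log_div hR hy).deriv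
  rw [hderiv.deriv_eq, deriv_const_div_id, neg_neg]

theorem sub_mul_mul_rpow_sub_one_eq {N p β lam : ℝ} (hp : 1 < p) (hβ : 0 ≤ β)
    (h : -(p - 1) * β ^ p + (N - p) * β ^ (p - 1) = lam / (p - 1) ^ (p - 1)) :
    (N - p) * ((p - 1) * β) ^ (p - 1) = ((p - 1) * β) ^ p + lam := by
  have hp0 : 0 < p - 1 := sub_pos.2 hp
  have hpow : (p - 1) ^ p = (p - 1) ^ (p - 1) * (p - 1) := by
    rw [← rpow_add_one hp0.ne', sub_add_cancel]
  have hlam : lam = (p - 1) ^ (p - 1) * (-(p - 1) * β ^ p + (N - p) * β ^ (p - 1)) := by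
    rw [h, mul_div_cancel₀ _ (rpow_pos_of_pos hp0 _).ne']
  rw [mul_rpow hp0.le hβ, mul_rpow hp0.le hβ, hpow, hlam]
  ring

theorem neg_rpow_mul_radial_eq {N p c lam r : ℝ} (hp : 1 < p) (hc : 0 ≤ c) (hr : 0 < r)
    (h : (N - p) * c ^ (p - 1) = c ^ p + lam) :
    -(c / r) ^ (p - 2) * ((p - 1) * (c / r ^ 2) + ((N - 1) / r) * -(c / r)) =
      (c / r) ^ p + lam / r ^ p := by
  have hcr : (c / r) ^ (p - 2) * (c / r) = (c / r) ^ (p - 1) := by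
    rw [← rpow_add_one' (div_nonneg hc hr.le) (by linarith)]
    ring_nf
  have hrp : r ^ (p - 1) * r = r ^ p := by
    rw [← rpow_add_one hr.ne', sub_add_cancel]
  calc -(c / r) ^ (p - 2) * ((p - 1) * (c / r ^ 2) + ((N - 1) / r) * -(c / r))
      = (c / r) ^ (p - 2) * (c / r) * ((N - p) / r) := by field_simp; ring
    _ = (N - p) * c ^ (p - 1) / (r ^ (p - 1) * r) := by
        rw [hcr, div_rpow hc hr.le]; field_simp
    _ = (c / r) ^ p + lam / r ^ p := by
        rw [h, hrp, div_rpow hc hr.le, add_div]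

theorem stmt11_general (N : ℕ) (p : ℝ) (hp1 : 1 < p)
    (lam β R : ℝ)
    (hβmem : β ∈ Set.Ico 0 (((N : ℝ) - p) / p))
    (hβeq : -(p - 1) * β ^ p + ((N : ℝ) - p) * β ^ (p - 1) = lam / (p - 1) ^ (p - 1))
    (v : ℝ → ℝ) (hv : v = fun r : ℝ => (p - 1) * β * Real.log (R / r)) :
    ∀ r ∈ Set.Ioo 0 R,
      -((-deriv v r) ^ (p - 2)) *
          ((p - 1) * deriv (deriv v) r + (((N : ℝ) - 1) / r) * deriv v r) =
        (-deriv v r) ^ p + lam / r ^ p := by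
  rintro r ⟨hr, hrR⟩
  have hR : R ≠ 0 := (hr.trans hrR).ne'
  subst hv
  rw [(hasDerivAt_mul_log_div hR hr.ne').deriv, deriv_deriv_mul_log_div hR hr.ne', neg_div, neg_neg]
  exact neg_rpow_mul_radial_eq hp1 (mul_nonneg (sub_pos.2 hp1).le hβmem.1) hr
    (sub_mul_mul_rpow_sub_one_eq hp1 hβmem.1 hβeq)

/-- for `1 < p < N`, `q = p` (so `γ = p`), `0 ≤ λ < c_p Λ_p` and
`β ∈ [0,(N−p)/p)` the solution of `−(p−1)β^p + (N−p)β^{p−1} = λ/c_p`, the function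
`v(r) = (p−1)β log(R/r)` satisfies
`−(−v')^{p−2}((p−1)v'' + ((N−1)/r)v') = (−v')^p + λ/r^p` on `(0,R)`. -/
theorem stmt11 (N : ℕ) (hN : 2 ≤ N) (p : ℝ) (hp1 : 1 < p) (hpN : p < N)
    (lam β R : ℝ) (hlam0 : 0 ≤ lam)
    (hlam : lam < (p - 1) ^ (p - 1) * (((N : ℝ) - p) / p) ^ p)
    (hβmem : β ∈ Set.Ico 0 (((N : ℝ) - p) / p))
    (hβeq : -(p - 1) * β ^ p + ((N : ℝ) - p) * β ^ (p - 1) = lam / (p - 1) ^ (p - 1))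
    (hR : 0 < R)
    (v : ℝ → ℝ) (hv : v = fun r : ℝ => (p - 1) * β * Real.log (R / r)) :
    ∀ r ∈ Set.Ioo 0 R,
      -((-deriv v r) ^ (p - 2)) *
          ((p - 1) * deriv (deriv v) r + (((N : ℝ) - 1) / r) * deriv v r) =
        (-deriv v r) ^ p + lam / r ^ p :=
  stmt11_general N p hp1 lam β R hβmem hβeq v hv
end

section
/- Let N ≥ 2 be an integer, 1 < p < N, p−1 < q ≤ p, γ = q/(q−(p−1)), c_γ = (γ−1)^{γ−1}, λ ≥ 0, R > 0. Let v ∈ C²((0,R)) with v'(r) < 0 for all r ∈ (0,R), suppose that ∫_r^R (−v'(τ))^{q−(p−1)} dτ is finite for every r ∈ (0,R), and that v satisfies −(−v'(r))^{p−2}·((p−1)v''(r) + ((N−1)/r)·v'(r)) = (−v'(r))^q + λ/r^γ on (0,R). Define V(r) = exp( (1/(γ−1)) ∫_r^R (−v'(τ))^{q−(p−1)} dτ ) − 1 for r ∈ (0,R). Then V satisfies −|V'(r)|^{γ−2}·((γ−1)V''(r) + ((N−1)/r)·V'(r)) = (λ/c_γ)·(V(r)+1)^{γ−1}/r^γ on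 (0,R). -/
/-!
Put `g = (-v')^(q-(p-1))`. Since `(γ-1)(q-(p-1)) = p-1` and `γ(q-(p-1)) = q`, the equation
for `v` becomes the Riccati equation `g^(γ-2) ((γ-1) g' + ((N-1)/r) g - g²) = λ/r^γ`.
The transform `V + 1 = exp (∫_r^R g / (γ-1))` gives `V' = -(V+1) g/(γ-1)`, and substituting
into the `γ`-operator yields `(V+1)^(γ-1)/(γ-1)^(γ-1)` times the left side of the Riccati
equation.
-/

open MeasureTheory Filter Topology Real Set

theorem deriv_eventuallyEq_of_exp_transform {w g V : ℝ → ℝ} {c x : ℝ}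
    (hw : ∀ᶠ y in 𝓝 x, HasDerivAt w (-g y) y)
    (hV : ∀ᶠ y in 𝓝 x, V y = exp (1 / c * w y) - 1) :
    deriv V =ᶠ[𝓝 x] fun y => -(exp (1 / c * w y) * g y / c) := by
  filter_upwards [hw, hV.eventually_nhds] with y hwy hVy
  rw [(((hwy.const_mul (1 / c)).exp.sub_const 1).congr_of_eventuallyEq hVy).deriv]
  ring

theorem deriv_deriv_of_exp_transform {w g V : ℝ → ℝ} {c g' x : ℝ}
    (hw : ∀ᶠ y in 𝓝 x, HasDerivAt w (-g y) y) (hg : HasDerivAt g g' x)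
    (hV : ∀ᶠ y in 𝓝 x, V y = exp (1 / c * w y) - 1) :
    deriv (deriv V) x = exp (1 / c * w x) * (g x ^ 2 / c ^ 2 - g' / c) := by
  have hE := (hw.self_of_nhds.const_mul (1 / c)).exp
  have hdV : HasDerivAt (fun y => -(exp (1 / c * w y) * g y / c))
      (-((exp (1 / c * w x) * (1 / c * -g x) * g x + exp (1 / c * w x) * g') / c)) x :=
    ((hE.mul hg).div_const c).neg
  rw [(deriv_eventuallyEq_of_exp_transform hw hV).deriv_eq, hdV.deriv]
  ring

theorem radial_operator_of_exp_transform {γ E g g' k : ℝ} (hγ : 1 < γ) (hE : 0 < E)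
    (hg : 0 < g) :
    -(|-(E * g / (γ - 1))| ^ (γ - 2)) *
        ((γ - 1) * (E * (g ^ 2 / (γ - 1) ^ 2 - g' / (γ - 1))) + k * -(E * g / (γ - 1))) =
      E ^ (γ - 1) / (γ - 1) ^ (γ - 1) * (g ^ (γ - 2) * ((γ - 1) * g' + k * g - g ^ 2)) := by
  have hc : 0 < γ - 1 := by linarith
  have hEγ : E ^ (γ - 1) = E ^ (γ - 2) * E := by rw [← rpow_add_one hE.ne']; ring_nf
  have hcγ : (γ - 1) ^ (γ - 1) = (γ - 1) ^ (γ - 2) * (γ - 1) := by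
    rw [← rpow_add_one hc.ne']; ring_nf
  rw [abs_neg, abs_of_pos (by positivity), div_rpow (by positivity) hc.le,
    mul_rpow hE.le hg.le, hEγ, hcγ]
  field_simp
  ring

theorem riccati_of_radial_eq {p q γ k f d₁ d₂ : ℝ} (hq : p - 1 < q)
    (hγ : γ = q / (q - (p - 1))) (hd₁ : d₁ < 0)
    (h : -((-d₁) ^ (p - 2)) * ((p - 1) * d₂ + k * d₁) = (-d₁) ^ q + f) :
    ((-d₁) ^ (q - (p - 1))) ^ (γ - 2) *
        ((γ - 1) * (-d₂ * (q - (p - 1)) * (-d₁) ^ (q - (p - 1) - 1)) +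
          k * (-d₁) ^ (q - (p - 1)) - ((-d₁) ^ (q - (p - 1))) ^ 2) = f := by
  set m := q - (p - 1) with hm
  obtain ⟨a, ha, rfl⟩ : ∃ a, 0 < a ∧ d₁ = -a := ⟨-d₁, by linarith, by ring⟩
  rw [neg_neg] at h ⊢
  have hm0 : m ≠ 0 := (sub_pos.mpr hq).ne'
  have hmγ : m * γ = q := by rw [hγ]; field_simp
  have hpow : ∀ e : ℝ, (a ^ m) ^ (γ - 2) * a ^ e = a ^ (e + (q - 2 * m)) := fun e => by
    rw [← rpow_mul ha.le, ← rpow_add ha]; congr 1; linear_combination hmγ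
  have e₁ : (a ^ m) ^ (γ - 2) * a ^ (m - 1) = a ^ (p - 2) := by
    rw [hpow]; congr 1; ring
  have e₂ : (a ^ m) ^ (γ - 2) * a ^ m = a ^ (p - 1) := by
    rw [hpow]; congr 1; ring
  have e₃ : (a ^ m) ^ (γ - 2) * (a ^ m) ^ 2 = a ^ q := by
    rw [sq, ← rpow_add ha, hpow]; congr 1; ring
  have e₄ : a ^ (p - 2) * a = a ^ (p - 1) := by
    rw [← rpow_add_one ha.ne']; ring_nf
  have hcm : (γ - 1) * m = p - 1 := by linear_combination hmγ - hm
  calc _ = (γ - 1) * m * -d₂ * ((a ^ m) ^ (γ - 2) * a ^ (m - 1)) +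
          k * ((a ^ m) ^ (γ - 2) * a ^ m) - (a ^ m) ^ (γ - 2) * (a ^ m) ^ 2 := by ring
    _ = (p - 1) * -d₂ * a ^ (p - 2) + k * a ^ (p - 1) - a ^ q := by rw [e₁, e₂, e₃, hcm]
    _ = f := by linear_combination h - k * e₄

theorem stmt12_general (N : ℕ) (p q γ lam R : ℝ)
    (hp1 : 1 < p) (hq1 : p - 1 < q)
    (hγ : γ = q / (q - (p - 1)))
    (v : ℝ → ℝ) (hv : ContDiffOn ℝ 2 v (Set.Ioo 0 R))
    (hv' : ∀ r ∈ Set.Ioo 0 R, deriv v r < 0)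
    (hint : ∀ r ∈ Set.Ioo 0 R,
      IntervalIntegrable (fun τ => (-deriv v τ) ^ (q - (p - 1))) volume r R)
    (hode : ∀ r ∈ Set.Ioo 0 R,
      -((-deriv v r) ^ (p - 2)) *
          ((p - 1) * deriv (deriv v) r + (((N : ℝ) - 1) / r) * deriv v r) =
        (-deriv v r) ^ q + lam / r ^ γ)
    (V : ℝ → ℝ)
    (hV : ∀ r ∈ Set.Ioo 0 R,
      V r = Real.exp ((1 / (γ - 1)) * ∫ τ in r..R, (-deriv v τ) ^ (q - (p - 1))) - 1) :
    ∀ r ∈ Set.Ioo 0 R,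
      -(|deriv V r| ^ (γ - 2)) *
          ((γ - 1) * deriv (deriv V) r + (((N : ℝ) - 1) / r) * deriv V r) =
        lam / (γ - 1) ^ (γ - 1) * (V r + 1) ^ (γ - 1) / r ^ γ := by
  intro r hr
  have hγ1 : 1 < γ := by rw [hγ, one_lt_div (by linarith)]; linarith
  have hU : IsOpen (Ioo 0 R) := isOpen_Ioo
  have hv₁ : ContDiffOn ℝ 1 (deriv v) (Ioo 0 R) := hv.deriv_of_isOpen hU (by norm_num)
  set g : ℝ → ℝ := fun τ => (-deriv v τ) ^ (q - (p - 1))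
  have hg : ContinuousOn g (Ioo 0 R) :=
    hv₁.continuousOn.neg.rpow_const fun x hx => Or.inl (neg_pos.mpr (hv' x hx)).ne'
  have hw : ∀ᶠ y in 𝓝 r, HasDerivAt (fun u => ∫ τ in u..R, g τ) (-g y) y := by
    filter_upwards [hU.mem_nhds hr] with y hy
    exact intervalIntegral.integral_hasDerivAt_left (hint y hy)
      (hg.stronglyMeasurableAtFilter hU y hy) (hg.continuousAt (hU.mem_nhds hy))
  have hg' : HasDerivAt g
      (-deriv (deriv v) r * (q - (p - 1)) * (-deriv v r) ^ (q - (p - 1) - 1)) r :=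
    ((hv₁.differentiableOn one_ne_zero r hr).differentiableAt (hU.mem_nhds hr)).hasDerivAt.neg
      |>.rpow_const (Or.inl (neg_pos.mpr (hv' r hr)).ne')
  have hVexp : ∀ᶠ y in 𝓝 r, V y = exp (1 / (γ - 1) * ∫ τ in y..R, g τ) - 1 :=
    eventually_of_mem (hU.mem_nhds hr) hV
  rw [(deriv_eventuallyEq_of_exp_transform hw hVexp).eq_of_nhds,
    deriv_deriv_of_exp_transform hw hg' hVexp, hV r hr, sub_add_cancel,
    radial_operator_of_exp_transform hγ1 (exp_pos _) (rpow_pos_of_pos (neg_pos.mpr (hv' r hr)) _),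
    riccati_of_radial_eq hq1 hγ (hv' r hr) (hode r hr)]
  ring

/-- if `v ∈ C²((0,R))` is decreasing, solves the radial `p`-problem
`−(−v')^{p−2}((p−1)v'' + ((N−1)/r)v') = (−v')^q + λ/r^γ`, and
`∫_r^R (−v')^{q−(p−1)}` is finite, then
`V(r) = exp((1/(γ−1)) ∫_r^R (−v'(τ))^{q−(p−1)} dτ) − 1` solves the radial `γ`-problem
`−|V'|^{γ−2}((γ−1)V'' + ((N−1)/r)V') = (λ/c_γ)(V+1)^{γ−1}/r^γ` on `(0,R)`. -/
theorem stmt12 (N : ℕ) (hN : 2 ≤ N) (p q γ lam R : ℝ)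
    (hp1 : 1 < p) (hpN : p < N) (hq1 : p - 1 < q) (hq2 : q ≤ p)
    (hγ : γ = q / (q - (p - 1))) (hlam : 0 ≤ lam) (hR : 0 < R)
    (v : ℝ → ℝ) (hv : ContDiffOn ℝ 2 v (Set.Ioo 0 R))
    (hv' : ∀ r ∈ Set.Ioo 0 R, deriv v r < 0)
    (hint : ∀ r ∈ Set.Ioo 0 R,
      IntervalIntegrable (fun τ => (-deriv v τ) ^ (q - (p - 1))) volume r R)
    (hode : ∀ r ∈ Set.Ioo 0 R,
      -((-deriv v r) ^ (p - 2)) *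
          ((p - 1) * deriv (deriv v) r + (((N : ℝ) - 1) / r) * deriv v r) =
        (-deriv v r) ^ q + lam / r ^ γ)
    (V : ℝ → ℝ)
    (hV : ∀ r ∈ Set.Ioo 0 R,
      V r = Real.exp ((1 / (γ - 1)) * ∫ τ in r..R, (-deriv v τ) ^ (q - (p - 1))) - 1) :
    ∀ r ∈ Set.Ioo 0 R,
      -(|deriv V r| ^ (γ - 2)) *
          ((γ - 1) * deriv (deriv V) r + (((N : ℝ) - 1) / r) * deriv V r) =
        lam / (γ - 1) ^ (γ - 1) * (V r + 1) ^ (γ - 1) / r ^ γ :=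
  stmt12_general N p q γ lam R hp1 hq1 hγ v hv hv' hint hode V hV
end

section
/- Let N ≥ 2 be an integer and 1 < p < N, and let q satisfy (p−1)·N/(N−1) < q < p, so that (N−1)q − N(p−1) > 0. Set K = ((q−(p−1))/(p−q)) · ( ((N−1)q − (p−1)N)/(q−(p−1)) )^{1/(q−(p−1))} and define u(r) = K·( r^{−(p−q)/(q−(p−1))} − 1 ) on (0,1). Then u' < 0 on (0,1), u(1) = 0, and u satisfies −(−u'(r))^{p−2}·((p−1)u''(r) + ((N−1)/r)·u'(r)) = (−u'(r))^q for all r ∈ (0,1). (Together with u ≡ 0, this exhibits two distinct nonnegative radially decreasing solutions of the problem with λ = 0.) -/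
/-!
Writing `u(r) = K (r^{-α} - 1)` with `β = α + 1 = 1/(q - (p-1))`, the function `w = -u'` is the
power law `c r^{-β}` with `c = K α`. For a power law both sides of the equation are multiples of
`r^{-β(p-1) - 1}`, and the exponents agree exactly when `β (q - (p-1)) = 1`; the coefficients then
agree when `c^{q-(p-1)} = N - 1 - (p-1) β`, which is what the choice of `K` arranges.
-/

open Real Set Filter

lemma hasDerivAt_mul_rpow_neg_sub_one (K α : ℝ) {r : ℝ} (hr : 0 < r) :
    HasDerivAt (fun x : ℝ => K * (x ^ (-α) - 1)) (-(K * α) * r ^ (-(α + 1))) r := by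
  refine (((Real.hasDerivAt_rpow_const (Or.inl hr.ne')).sub_const 1).const_mul K).congr_deriv ?_
  rw [neg_add']
  ring

lemma deriv_mul_rpow_neg_sub_one (K α : ℝ) {r : ℝ} (hr : 0 < r) :
    deriv (fun x : ℝ => K * (x ^ (-α) - 1)) r = -(K * α) * r ^ (-(α + 1)) :=
  (hasDerivAt_mul_rpow_neg_sub_one K α hr).deriv

lemma deriv_deriv_mul_rpow_neg_sub_one (K α : ℝ) {r : ℝ} (hr : 0 < r) :
    deriv (deriv fun x : ℝ => K * (x ^ (-α) - 1)) r =
      K * α * (α + 1) * r ^ (-(α + 1) - 1) := by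
  have hfirst : (deriv fun x : ℝ => K * (x ^ (-α) - 1)) =ᶠ[nhds r]
      fun x => -(K * α) * x ^ (-(α + 1)) :=
    eventually_of_mem (Ioi_mem_nhds hr) fun x hx => deriv_mul_rpow_neg_sub_one K α hx
  rw [hfirst.deriv_eq, ((Real.hasDerivAt_rpow_const (Or.inl hr.ne')).const_mul _).deriv]
  ring

/-- The radial equation for `u' = -c r^{-β}`, `u'' = c β r^{-β-1}`. -/
lemma power_law_solves_radial_equation {N p q β c r : ℝ} (hc : 0 < c) (hr : 0 < r)
    (hβ : β * (q - (p - 1)) = 1) (hcβ : c ^ (q - (p - 1)) = N - 1 - (p - 1) * β) :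
    -((c * r ^ (-β)) ^ (p - 2)) *
        ((p - 1) * (c * β * r ^ (-β - 1)) + (N - 1) / r * -(c * r ^ (-β))) =
      (c * r ^ (-β)) ^ q := by
  set w := c * r ^ (-β)
  have hw : 0 < w := mul_pos hc (rpow_pos_of_pos hr _)
  have hstep : r ^ (-β - 1) = r ^ (-β) / r := by
    rw [rpow_sub hr, rpow_one]
  have hws : w ^ (q - (p - 1)) = c ^ (q - (p - 1)) / r := by
    rw [mul_rpow hc.le (rpow_nonneg hr.le _), ← rpow_mul hr.le, neg_mul, hβ, rpow_neg_one,
      div_eq_mul_inv]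
  calc -(w ^ (p - 2)) * ((p - 1) * (c * β * r ^ (-β - 1)) + (N - 1) / r * -w)
      = w ^ (p - 2) * w * ((N - 1 - (p - 1) * β) / r) := by
        rw [hstep]; field_simp; ring
    _ = w ^ (p - 1) * w ^ (q - (p - 1)) := by
        rw [hws, hcβ, ← rpow_add_one hw.ne']; ring_nf
    _ = w ^ q := by rw [← rpow_add hw, add_sub_cancel]

theorem stmt14_general (N : ℕ) (hN : 2 ≤ N) (p q : ℝ) (hp1 : 1 < p)
    (hq1 : (p - 1) * N / ((N : ℝ) - 1) < q) (hq2 : q < p)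
    (K : ℝ)
    (hK : K = ((q - (p - 1)) / (p - q)) *
      ((((N : ℝ) - 1) * q - (p - 1) * N) / (q - (p - 1))) ^ (1 / (q - (p - 1))))
    (u : ℝ → ℝ)
    (hu : u = fun r : ℝ => K * (r ^ (-((p - q) / (q - (p - 1)))) - 1)) :
    (∀ r ∈ Set.Ioo (0 : ℝ) 1, deriv u r < 0) ∧
    u 1 = 0 ∧
    ∀ r ∈ Set.Ioo (0 : ℝ) 1,
      -((-deriv u r) ^ (p - 2)) *
          ((p - 1) * deriv (deriv u) r + (((N : ℝ) - 1) / r) * deriv u r) =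
        (-deriv u r) ^ q := by
  have hN1 : (0 : ℝ) < N - 1 := by
    have : (2 : ℝ) ≤ N := by exact_mod_cast hN
    linarith
  rw [div_lt_iff₀ hN1] at hq1
  have hs : 0 < q - (p - 1) := by nlinarith
  have hpq : 0 < p - q := by linarith
  set s := q - (p - 1)
  set α := (p - q) / s with hα
  set M := ((N - 1) * q - (p - 1) * N) / s with hM_def
  have hM : 0 < M := div_pos (by linarith) hs
  have hc : K * α = M ^ (1 / s) := by
    rw [hK, hα]; field_simp
  have hcpos : 0 < K * α := hc ▸ rpow_pos_of_pos hM _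
  have hβ : (α + 1) * s = 1 := by rw [hα]; field_simp; ring
  have hcβ : (K * α) ^ s = N - 1 - (p - 1) * (α + 1) := by
    rw [hc, ← rpow_mul hM.le, one_div_mul_cancel hs.ne', rpow_one, hα, hM_def]
    field_simp
    ring
  subst hu
  refine ⟨fun r hr => ?_, by simp, fun r hr => ?_⟩
  · rw [deriv_mul_rpow_neg_sub_one K α hr.1, neg_mul]
    exact neg_neg_of_pos (mul_pos hcpos (rpow_pos_of_pos hr.1 _))
  · rw [deriv_mul_rpow_neg_sub_one K α hr.1, deriv_deriv_mul_rpow_neg_sub_one K α hr.1,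
      neg_mul (K * α), neg_neg]
    exact power_law_solves_radial_equation hcpos hr.1 hβ hcβ

/-- for `1 < p < N` and `(p−1)N/(N−1) < q < p`, the function
`u(r) = K(r^{−(p−q)/(q−(p−1))} − 1)` with
`K = ((q−(p−1))/(p−q))·(((N−1)q−(p−1)N)/(q−(p−1)))^{1/(q−(p−1))}`
is decreasing on `(0,1)`, vanishes at `1`, and satisfies
`−(−u')^{p−2}((p−1)u'' + ((N−1)/r)u') = (−u')^q` on `(0,1)`. -/
theorem stmt14 (N : ℕ) (hN : 2 ≤ N) (p q : ℝ) (hp1 : 1 < p) (hpN : p < N)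
    (hq1 : (p - 1) * N / ((N : ℝ) - 1) < q) (hq2 : q < p)
    (K : ℝ)
    (hK : K = ((q - (p - 1)) / (p - q)) *
      ((((N : ℝ) - 1) * q - (p - 1) * N) / (q - (p - 1))) ^ (1 / (q - (p - 1))))
    (u : ℝ → ℝ)
    (hu : u = fun r : ℝ => K * (r ^ (-((p - q) / (q - (p - 1)))) - 1)) :
    (∀ r ∈ Set.Ioo (0 : ℝ) 1, deriv u r < 0) ∧
    u 1 = 0 ∧
    ∀ r ∈ Set.Ioo (0 : ℝ) 1,
      -((-deriv u r) ^ (p - 2)) *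
          ((p - 1) * deriv (deriv u) r + (((N : ℝ) - 1) / r) * deriv u r) =
        (-deriv u r) ^ q :=
  stmt14_general N hN p q hp1 hq1 hq2 K hK u hu
end
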